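/- arXiv:2201.03735 — 3 statements merged into one kernel-verified Lean document; each statement's English description precedes it below -/
import Mathlib

section
/- There exists a subset P of the real numbers such that P is dense in ℝ, and neither the difference set P − P = {a − b : a, b ∈ P} nor the difference set Pᶜ − Pᶜ = {a − b : a, b ∈ ℝ \ P} contains a nonempty open interval of ℝ. -/
/-- The difference set `A - A = {a - b : a, b ∈ A}`. -/
def diffSet (A : Set ℝ) : Set ℝ := {x | ∃ a ∈ A, ∃ b ∈ A, x = a - b}

/-!
Since `1` and `√2` are linearly independent over `ℚ`, there is a `ℚ`-linear `φ : ℝ → ℚ` vanishing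
on `ℚ` with `φ √2 = 1`. Take `P = {x | ⌊φ x⌋ even}`; it contains `ℚ`, so it is dense. If
`φ (a - b) = 1` then `⌊φ a⌋ = ⌊φ b⌋ + 1`, so exactly one of `a`, `b` lies in `P`. Hence neither
`P - P` nor `Pᶜ - Pᶜ` meets the fibre `φ⁻¹ {1} ⊇ √2 + ℚ`, which is dense.
-/

open Set

theorem Int.even_floor_add_one_iff {R : Type*} [Ring R] [LinearOrder R] [IsOrderedRing R]
    [FloorRing R] (a : R) :
    Even ⌊a + 1⌋ ↔ ¬Even ⌊a⌋ := by
  rw [Int.floor_add_one, Int.even_add_one]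

theorem not_Ioo_subset_of_dense_compl {α : Type*} [TopologicalSpace α] [LinearOrder α]
    [OrderTopology α] [DenselyOrdered α] {S : Set α} (hS : Dense Sᶜ) {x y : α} (hxy : x < y) :
    ¬Ioo x y ⊆ S := fun h ↦
  let ⟨_, hzI, hzS⟩ := hS.inter_open_nonempty _ isOpen_Ioo (nonempty_Ioo.2 hxy)
  hzS (h hzI)

theorem Irrational.exists_linearMap_rat {α : ℝ} (hα : Irrational α) :
    ∃ φ : ℝ →ₗ[ℚ] ℚ, (∀ q : ℚ, φ q = 0) ∧ φ α = 1 := by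
  have hα' : α ∉ Submodule.span ℚ {(1 : ℝ)} := by
    rw [Submodule.mem_span_singleton]
    rintro ⟨q, rfl⟩
    exact hα ⟨q, by simp [Rat.smul_one_eq_cast]⟩
  obtain ⟨f, hfα, hf⟩ := Submodule.exists_dual_map_eq_bot_of_notMem hα' inferInstance
  refine ⟨(f α)⁻¹ • f, fun q ↦ ?_, by simp [hfα]⟩
  have : f q ∈ (Submodule.span ℚ {(1 : ℝ)}).map f :=
    Submodule.mem_map_of_mem (Submodule.mem_span_singleton.2 ⟨q, Rat.smul_one_eq_cast ℝ q⟩)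
  simp_all

theorem dense_setOf_linearMap_rat_eq {φ : ℝ →ₗ[ℚ] ℚ} (hφ : ∀ q : ℚ, φ q = 0) (t : ℝ) :
    Dense {x | φ x = φ t} := by
  have hdense : DenseRange fun q : ℚ ↦ t + q :=
    (Homeomorph.addLeft t).surjective.denseRange.comp Rat.denseRange_cast (by fun_prop)
  refine hdense.mono ?_
  rintro _ ⟨q, rfl⟩
  simp [hφ]

theorem setOf_eq_one_subset_compl_diffSet {R : Type*} [Ring R] [LinearOrder R] [IsOrderedRing R]
    [FloorRing R] {f : ℝ →+ R} {A : Set ℝ} (hA : ∀ a ∈ A, ∀ b ∈ A, (Even ⌊f a⌋ ↔ Even ⌊f b⌋)) :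
    {z | f z = 1} ⊆ (diffSet A)ᶜ := by
  rintro _ (hab : f _ = 1) ⟨a, ha, b, hb, rfl⟩
  have hfa : f a = f b + 1 := by rw [map_sub] at hab; rw [← hab, add_sub_cancel]
  have := hA a ha b hb
  rw [hfa, Int.even_floor_add_one_iff] at this
  exact not_iff_self this

theorem exists_dense_no_interval_in_diffSets :
    ∃ P : Set ℝ, Dense P ∧
      (∀ x y : ℝ, x < y → ¬ Set.Ioo x y ⊆ diffSet P) ∧
      (∀ x y : ℝ, x < y → ¬ Set.Ioo x y ⊆ diffSet Pᶜ) := by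
  obtain ⟨φ, hφℚ, hφ⟩ := irrational_sqrt_two.exists_linearMap_rat
  have hzero := dense_setOf_linearMap_rat_eq hφℚ 0
  have hone : Dense {z | φ.toAddMonoidHom z = 1} := by
    simpa [hφ] using dense_setOf_linearMap_rat_eq hφℚ √2
  refine ⟨{x | Even ⌊φ x⌋}, hzero.mono fun x hx ↦ ?_, fun x y hxy ↦ ?_, fun x y hxy ↦ ?_⟩
  · simp_all
  · exact not_Ioo_subset_of_dense_compl (hone.mono
      (setOf_eq_one_subset_compl_diffSet fun a ha b hb ↦ iff_of_true ha hb)) hxy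
  · exact not_Ioo_subset_of_dense_compl (hone.mono
      (setOf_eq_one_subset_compl_diffSet fun a ha b hb ↦ iff_of_false ha hb)) hxy
end

section
/- Let S = {2N + (2k+1)/3^n : N, k ∈ ℤ, n ∈ ℕ, |2k+1| < 3^n}. For any odd natural number m, any s₁, …, s_m ∈ S, and any choice of signs ε₁, …, ε_m ∈ {1, −1}, the signed sum ε₁s₁ + ε₂s₂ + ⋯ + ε_m s_m is nonzero. -/
theorem signed_sum_ne_zero_of_mem_S_odd
    (S : Set ℝ)
    (hS : S = {x : ℝ | ∃ N k : ℤ, ∃ n : ℕ, |2 * k + 1| < 3 ^ n ∧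
      x = 2 * (N : ℝ) + (2 * (k : ℝ) + 1) / 3 ^ n})
    (m : ℕ) (hm : Odd m)
    (s : Fin m → ℝ) (hs : ∀ i, s i ∈ S)
    (ε : Fin m → ℝ) (hε : ∀ i, ε i = 1 ∨ ε i = -1) :
    ∑ i, ε i * s i ≠ 0 := by
  simp only [hS, Set.mem_setOf_eq] at hs
  choose N k n hlt heq using hs
  set M : ℕ := Finset.univ.sup n with hM
  have hnM : ∀ i, n i ≤ M := fun i => Finset.le_sup (Finset.mem_univ i)
  classical
  set εz : Fin m → ℤ := fun i => if ε i = 1 then 1 else -1 with hεz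
  have hεcast : ∀ i, (εz i : ℝ) = ε i := by
    intro i
    rcases hε i with h | h
    · simp [hεz, h]
    · simp only [hεz, h]
      rw [if_neg (by norm_num)]
      norm_num
  set b : Fin m → ℤ :=
    fun i => εz i * (2 * N i * 3 ^ M + (2 * k i + 1) * 3 ^ (M - n i)) with hb
  have hbcast : ∀ i, (b i : ℝ) = ε i * s i * 3 ^ M := by
    intro i
    have h3 : (3 : ℝ) ^ M = 3 ^ (n i) * 3 ^ (M - n i) := by
      rw [← pow_add, Nat.add_sub_cancel' (hnM i)]
    have hne : (3 : ℝ) ^ (n i) ≠ 0 := by positivity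
    rw [hb]
    push_cast
    rw [← hεcast i, heq i, h3]
    field_simp
  have hbodd : ∀ i, Odd (b i) := by
    intro i
    have h1 : Odd (εz i) := by
      rcases hε i with h | h
      · simp only [hεz, h, if_pos rfl]; exact odd_one
      · simp only [hεz, h]
        rw [if_neg (by norm_num)]
        exact ⟨-1, by ring⟩
    have h2 : Odd (2 * N i * 3 ^ M + (2 * k i + 1) * 3 ^ (M - n i)) := by
      refine Even.add_odd ⟨N i * 3 ^ M, by ring⟩ (Odd.mul ⟨k i, by ring⟩ ?_)
      exact Odd.pow ⟨1, by ring⟩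
    exact h1.mul h2
  intro hzero
  have hsum : (∑ i, b i : ℤ) = 0 := by
    have : ((∑ i, b i : ℤ) : ℝ) = (∑ i, ε i * s i) * 3 ^ M := by
      push_cast
      rw [Finset.sum_mul]
      exact Finset.sum_congr rfl fun i _ => by push_cast [hbcast i]; ring
    rw [hzero, zero_mul] at this
    exact_mod_cast this
  have : ((∑ i, b i : ℤ) : ZMod 2) = 1 := by
    push_cast
    have : ∀ i ∈ Finset.univ, ((b i : ZMod 2)) = 1 := by
      intro i _
      obtain ⟨c, hc⟩ := hbodd i
      have : ((b i : ℤ) : ZMod 2) = ((2 * c + 1 : ℤ) : ZMod 2) := by rw [hc]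
      rw [this]; push_cast
      rw [show ((2 : ZMod 2)) = 0 from rfl]; ring
    rw [Finset.sum_congr rfl this, Finset.sum_const, Finset.card_univ, Fintype.card_fin]
    obtain ⟨t, ht⟩ := hm
    subst ht
    rw [nsmul_eq_mul]
    push_cast
    rw [show ((2 : ZMod 2)) = 0 from rfl]; ring
  rw [hsum] at this
  simp at this
end

section
/- Let S = {2N + (2k+1)/3^n : N, k ∈ ℤ, n ∈ ℕ, |2k+1| < 3^n}. There exists a subset P ⊆ ℝ such that the difference set P − P is disjoint from S and the difference set Pᶜ − Pᶜ is disjoint from S, where Pᶜ = ℝ \ P. -/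
theorem exists_set_add_mem_iff_not_mem {G : Type*} [AddGroup G] {c : G}
    (hc : addOrderOf c = 2) : ∃ P : Set G, ∀ y, y + c ∈ P ↔ y ∉ P := by
  classical
  let H := AddSubgroup.zmultiples c
  have mem_H : ∀ x ∈ H, x = 0 ∨ x = c := by
    intro x hx
    rw [(addOrderOf_pos_iff.1 (by omega)).mem_zmultiples_iff_mem_range_addOrderOf,
      hc] at hx
    simp [Finset.range_add_one] at hx
    tauto
  have hy : ∀ y : G, y ≠ y + c := fun y h => by simp [left_eq_add.1 h] at hc
  refine ⟨{y | (y : G ⧸ H).out = y}, fun y => ?_⟩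
  have hmk : ((y + c : G) : G ⧸ H) = y := QuotientAddGroup.eq.2 (by simp [H])
  obtain ⟨⟨h, h_mem⟩, hout⟩ := QuotientAddGroup.mk_out_eq_add H y
  simp only [Set.mem_ofPred_eq, hmk, hout]
  rcases mem_H h h_mem with rfl | rfl
  · simpa using (hy y).symm
  · simpa using hy y

/-- The subgroup `2ℤ[1/3]` of `ℝ`. -/
def evenTriadic : AddSubgroup ℝ where
  carrier := {x | ∃ m : ℤ, ∃ n : ℕ, x = 2 * m / 3 ^ n}
  zero_mem' := ⟨0, 0, by simp⟩
  add_mem' := by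
    rintro _ _ ⟨a, p, rfl⟩ ⟨b, q, rfl⟩
    exact ⟨a * 3 ^ q + b * 3 ^ p, p + q, by push_cast; field_simp; ring⟩
  neg_mem' := by
    rintro _ ⟨a, p, rfl⟩
    exact ⟨-a, p, by push_cast; ring⟩

lemma one_third_notMem_evenTriadic : (1 / 3 : ℝ) ∉ evenTriadic := by
  rintro ⟨m, n, hm⟩
  have h : (3 : ℤ) ^ n = 2 * (3 * m) := by
    field_simp at hm
    exact_mod_cast (by linarith : (3 : ℝ) ^ n = 2 * (3 * m))
  have h3 : Odd ((3 : ℤ) ^ n) := Odd.pow (by decide)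
  exact Int.not_even_iff_odd.2 h3 ⟨3 * m, by omega⟩

lemma two_thirds_mem_evenTriadic : (2 / 3 : ℝ) ∈ evenTriadic := ⟨1, 1, by norm_num⟩

/-- Both `j` and `3 ^ n` are odd, so `j / 3 ^ n - 1 / 3 = (3 j - 3 ^ n) / 3 ^ (n + 1)` has an
even numerator. -/
lemma two_mul_add_odd_div_sub_one_third_mem_evenTriadic (N k : ℤ) (n : ℕ) :
    2 * (N : ℝ) + (2 * k + 1) / 3 ^ n - 1 / 3 ∈ evenTriadic := by
  obtain ⟨t, ht⟩ : Odd ((3 : ℤ) ^ n) := Odd.pow (by decide)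
  refine ⟨N * 3 ^ (n + 1) + 3 * k + 1 - t, n + 1, ?_⟩
  have h3 : (3 : ℝ) ^ n = 2 * t + 1 := by exact_mod_cast ht
  push_cast
  rw [pow_succ]
  field_simp
  rw [h3]
  ring

lemma disjoint_diffSet_of_add_mem_iff {P T : Set ℝ} (h : ∀ x, ∀ t ∈ T, x + t ∈ P ↔ x ∉ P) :
    Disjoint (diffSet P) T ∧ Disjoint (diffSet Pᶜ) T := by
  refine ⟨Set.disjoint_left.2 ?_, Set.disjoint_left.2 ?_⟩ <;>
  · rintro _ ⟨a, ha, b, hb, rfl⟩ hT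
    have := h b _ hT
    simp_all

theorem exists_set_diffSets_disjoint_from_S
    (S : Set ℝ)
    (hS : S = {x : ℝ | ∃ N k : ℤ, ∃ n : ℕ, |2 * k + 1| < 3 ^ n ∧
      x = 2 * (N : ℝ) + (2 * (k : ℝ) + 1) / 3 ^ n}) :
    ∃ P : Set ℝ, Disjoint (diffSet P) S ∧ Disjoint (diffSet Pᶜ) S := by
  let c : ℝ ⧸ evenTriadic := ↑(1 / 3 : ℝ)
  have hc : addOrderOf c = 2 := by
    refine addOrderOf_eq_prime ?_
      (mt (QuotientAddGroup.eq_zero_iff _).1 one_third_notMem_evenTriadic)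
    rw [two_nsmul, ← QuotientAddGroup.mk_add, QuotientAddGroup.eq_zero_iff]
    convert two_thirds_mem_evenTriadic using 1
    norm_num
  have hS_coset : ∀ s ∈ S, (s : ℝ ⧸ evenTriadic) = c := by
    rw [hS]
    rintro s ⟨N, k, n, -, rfl⟩
    exact QuotientAddGroup.eq_iff_sub_mem.2
      (two_mul_add_odd_div_sub_one_third_mem_evenTriadic N k n)
  obtain ⟨P, hP⟩ := exists_set_add_mem_iff_not_mem hc
  refine ⟨(↑) ⁻¹' P, disjoint_diffSet_of_add_mem_iff fun x s hs => ?_⟩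
  simpa [hS_coset s hs] using hP x
end
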